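/- arXiv:1107.2476 — 2 statements merged into one kernel-verified Lean document; each statement's English description precedes it below -/
import Mathlib

section
/- Let ν be a Borel measure on ℝ^d with ν(B₁ᶜ) = 0 and ν(B_εᶜ) < ∞ for every ε > 0 (where B_r is the closed ball of radius r). Then for every k ≥ 1 and every r > k−1, the k-fold convolution ν^(k) satisfies ν^(k)(B_rᶜ) < ∞; that is, ν^(k) is a Radon measure on ℝ^d \ B_{k−1}. -/
open MeasureTheory Set

/-! Almost surely all `k` summands have norm at most `1`, and then a sum of norm greater than `r`
forces every summand to have norm greater than `r - (k - 1)`. Hence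
`ν^(k)(B_rᶜ) ≤ ν(B_{r-k+1}ᶜ)^k`, which is finite as soon as `r - (k - 1) > 0`. -/

theorem norm_sum_le_norm_add_card_sub_one {ι E : Type*} [Fintype ι] [SeminormedAddCommGroup E]
    {x : ι → E} (hx : ∀ j, ‖x j‖ ≤ 1) (i : ι) :
    ‖∑ j, x j‖ ≤ ‖x i‖ + (Fintype.card ι - 1) := by
  classical
  calc ‖∑ j, x j‖ ≤ ∑ j, ‖x j‖ := norm_sum_le _ _
    _ = ‖x i‖ + ∑ j ∈ Finset.univ.erase i, ‖x j‖ :=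
      (Finset.add_sum_erase _ _ (Finset.mem_univ i)).symm
    _ ≤ ‖x i‖ + ∑ _j ∈ Finset.univ.erase i, (1 : ℝ) := by gcongr with j; exact hx j
    _ = ‖x i‖ + (Fintype.card ι - 1) := by
      simp [Finset.card_erase_of_mem, Nat.cast_sub (Fintype.card_pos_iff.2 ⟨i⟩)]

namespace MeasureTheory.Measure

variable {ι : Type*} [Fintype ι] {α : ι → Type*} [∀ i, MeasurableSpace (α i)]

/-- Unlike `Measure.pi_pi`, this needs no σ-finiteness, which can fail for a Lévy-type measure
with infinite mass near `0`. -/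
theorem pi_univ_pi_le_prod (μ : ∀ i, Measure (α i)) (s : ∀ i, Set (α i)) :
    Measure.pi μ (univ.pi s) ≤ ∏ i, μ i (s i) :=
  calc Measure.pi μ (univ.pi s)
      ≤ Measure.pi μ (univ.pi fun i => toMeasurable (μ i) (s i)) :=
        measure_mono (pi_mono fun i _ => subset_toMeasurable _ _)
    _ ≤ ∏ i, μ i (toMeasurable (μ i) (s i)) := by
        rw [Measure.pi_def, toMeasure_apply _ _ (.univ_pi fun i => measurableSet_toMeasurable _ _)]
        exact OuterMeasure.pi_pi_le _ _
    _ = ∏ i, μ i (s i) := by simp_rw [measure_toMeasurable]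

theorem pi_eval_preimage_eq_zero (μ : ∀ i, Measure (α i)) {i : ι} {s : Set (α i)}
    (hs : μ i s = 0) : Measure.pi μ (Function.eval i ⁻¹' s) = 0 := by
  classical
  refine nonpos_iff_eq_zero.1 ?_
  rw [← univ_pi_update_univ]
  refine (pi_univ_pi_le_prod μ _).trans_eq (Finset.prod_eq_zero (Finset.mem_univ i) ?_)
  simpa using hs

end MeasureTheory.Measure

theorem map_sum_pi_norm_gt_le {ι E : Type*} [Fintype ι] [NormedAddCommGroup E] [MeasurableSpace E]
    [MeasurableAdd₂ E] [OpensMeasurableSpace E] (ν : Measure E) (hν : ν {x | 1 < ‖x‖} = 0)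
    (r : ℝ) :
    (Measure.pi fun _ : ι => ν).map (fun x => ∑ i, x i) {x | r < ‖x‖} ≤
      ν {x | r - (Fintype.card ι - 1) < ‖x‖} ^ Fintype.card ι := by
  rw [Measure.map_apply (Finset.measurable_sum _ fun i _ => measurable_pi_apply i)
    (measurableSet_lt measurable_const measurable_norm)]
  have h_unit : ∀ᵐ x ∂Measure.pi fun _ : ι => ν, ∀ i, ‖x i‖ ≤ 1 :=
    ae_all_iff.2 fun i => ae_iff.2 <|
      Measure.pi_eval_preimage_eq_zero (s := {y | ¬‖y‖ ≤ 1}) _ (by simpa using hν)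
  calc Measure.pi (fun _ : ι => ν) ((fun x => ∑ i, x i) ⁻¹' {x | r < ‖x‖})
      ≤ Measure.pi (fun _ : ι => ν) (univ.pi fun _ => {x | r - (Fintype.card ι - 1) < ‖x‖}) :=
        measure_mono_ae <| h_unit.mono fun x hx hr i _ => by
          have hr : r < ‖∑ j, x j‖ := hr
          have := norm_sum_le_norm_add_card_sub_one hx i
          show r - (Fintype.card ι - 1) < ‖x i‖
          linarith
    _ ≤ ∏ _i : ι, ν {x | r - (Fintype.card ι - 1) < ‖x‖} := Measure.pi_univ_pi_le_prod _ _
    _ = ν {x | r - (Fintype.card ι - 1) < ‖x‖} ^ Fintype.card ι := Finset.prod_const _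

theorem stmt3_general (d : ℕ) (ν : Measure (EuclideanSpace ℝ (Fin d)))
    (hsupp : ν {x | 1 < ‖x‖} = 0)
    (hfin : ∀ ε : ℝ, 0 < ε → ν {x | ε < ‖x‖} < ⊤)
    (k : ℕ) (r : ℝ) (hr : (k : ℝ) - 1 < r) :
    (Measure.map (fun x : Fin k → EuclideanSpace ℝ (Fin d) => ∑ i, x i)
      (Measure.pi fun _ : Fin k => ν)) {x | r < ‖x‖} < ⊤ := by
  refine (map_sum_pi_norm_gt_le ν hsupp r).trans_lt (ENNReal.pow_lt_top (hfin _ ?_))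
  rw [Fintype.card_fin]
  linarith

/-- If `ν` is a Borel measure on `ℝ^d` supported on the closed unit ball which is finite outside
every ball of positive radius, then for every `k ≥ 1` and `r > k - 1` the `k`-fold convolution
`ν^(k)` satisfies `ν^(k)(B_rᶜ) < ∞`, i.e. `ν^(k)` is Radon on `ℝ^d \ B_{k-1}`. -/
theorem stmt3 (d : ℕ) (ν : Measure (EuclideanSpace ℝ (Fin d)))
    (hsupp : ν {x | 1 < ‖x‖} = 0)
    (hfin : ∀ ε : ℝ, 0 < ε → ν {x | ε < ‖x‖} < ⊤)
    (k : ℕ) (hk : 1 ≤ k) (r : ℝ) (hr : (k : ℝ) - 1 < r) :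
    (Measure.map (fun x : Fin k → EuclideanSpace ℝ (Fin d) => ∑ i, x i)
      (Measure.pi fun _ : Fin k => ν)) {x | r < ‖x‖} < ⊤ :=
  stmt3_general d ν hsupp hfin k r hr
end

section
/- Let P(‖H‖ > ·) be regularly varying of index −α with α > 2, M_n → ∞ with M_n ≫ √n, and fix β ∈ (0,1). Then n P(‖H‖ > M_n / log M_n) = o( (n P(‖H‖ > M_n))^β ) as n → ∞. -/
open MeasureTheory Filter

private lemma auxA (F : ℝ → ℝ) (hFpos : ∀ t, 0 < F t) (hanti : Antitone F)
    (a' T : ℝ) (ha' : 0 < a') (hT : 0 < T)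
    (hstep : ∀ t, T ≤ t → F (t * 2) ≤ 2 ^ (-a') * F t) :
    ∀ t, T ≤ t → F t ≤ ((2 * T) ^ a' * F T) * t ^ (-a') := by
  have base : ∀ t, T ≤ t → t ≤ 2 * T → F t ≤ ((2 * T) ^ a' * F T) * t ^ (-a') := by
    intro t ht ht2
    have htpos : 0 < t := lt_of_lt_of_le hT ht
    have h1 : (2 * T) ^ (-a') ≤ t ^ (-a') :=
      Real.rpow_le_rpow_of_nonpos htpos ht2 (neg_nonpos.mpr ha'.le)
    calc F t ≤ F T := hanti ht
      _ = ((2 * T) ^ a' * F T) * (2 * T) ^ (-a') := by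
          rw [mul_comm ((2 * T) ^ a') (F T), mul_assoc,
            ← Real.rpow_add (by positivity : (0:ℝ) < 2 * T)]
          simp
      _ ≤ ((2 * T) ^ a' * F T) * t ^ (-a') := by
          apply mul_le_mul_of_nonneg_left h1
          have := (hFpos T).le
          positivity
  have key : ∀ k : ℕ, ∀ t, T ≤ t → t ≤ 2 ^ k * (2 * T) →
      F t ≤ ((2 * T) ^ a' * F T) * t ^ (-a') := by
    intro k
    induction k with
    | zero =>
      intro t ht ht2
      exact base t ht (by simpa using ht2)
    | succ k ih =>
      intro t ht ht2
      by_cases hc : t ≤ 2 ^ k * (2 * T)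
      · exact ih t ht hc
      push_neg at hc
      have htpos : 0 < t := lt_of_lt_of_le hT ht
      have h2T : 2 * T ≤ t := by
        have h1 : (1:ℝ) ≤ 2 ^ k := one_le_pow₀ (by norm_num)
        nlinarith
      have hhalf1 : T ≤ t / 2 := by linarith
      have hhalf2 : t / 2 ≤ 2 ^ k * (2 * T) := by
        rw [pow_succ] at ht2; nlinarith
      have hIH := ih (t / 2) hhalf1 hhalf2
      have hs := hstep (t / 2) hhalf1
      rw [div_mul_cancel₀ t (two_ne_zero)] at hs
      have h2 : (t / 2) ^ (-a') = t ^ (-a') / 2 ^ (-a') :=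
        Real.div_rpow htpos.le (by norm_num) _
      have h2pos : (0:ℝ) < 2 ^ (-a') := Real.rpow_pos_of_pos two_pos _
      calc F t ≤ 2 ^ (-a') * F (t / 2) := hs
        _ ≤ 2 ^ (-a') * (((2 * T) ^ a' * F T) * (t / 2) ^ (-a')) :=
            mul_le_mul_of_nonneg_left hIH h2pos.le
        _ = ((2 * T) ^ a' * F T) * t ^ (-a') := by
            rw [h2]; field_simp
  intro t ht
  obtain ⟨k, hk⟩ := pow_unbounded_of_one_lt (t / (2 * T)) (by norm_num : (1:ℝ) < 2)
  refine key k t ht ?_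
  rw [div_lt_iff₀ (by positivity)] at hk
  linarith

private lemma auxB (F : ℝ → ℝ) (a'' T : ℝ) (hT : 0 < T) (ha'' : 0 ≤ a'')
    (hstep : ∀ t, T ≤ t → F t ≤ 2 ^ a'' * F (t * 2)) :
    ∀ k : ℕ, ∀ t, T ≤ t → F t ≤ 2 ^ (a'' * k) * F (t * 2 ^ k) := by
  intro k
  induction k with
  | zero => intro t ht; simp
  | succ k ih =>
    intro t ht
    have htpos : 0 < t := lt_of_lt_of_le hT ht
    have h1 := hstep t ht
    have h2 := ih (t * 2) (by nlinarith)
    have e1 : t * 2 * (2:ℝ) ^ k = t * 2 ^ (k + 1) := by rw [pow_succ]; ring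
    have e2 : (2:ℝ) ^ a'' * 2 ^ (a'' * k) = 2 ^ (a'' * (k + 1 : ℕ)) := by
      rw [← Real.rpow_add two_pos]; congr 1; push_cast; ring
    calc F t ≤ 2 ^ a'' * F (t * 2) := h1
      _ ≤ 2 ^ a'' * (2 ^ (a'' * k) * F (t * 2 * 2 ^ k)) :=
          mul_le_mul_of_nonneg_left h2 (Real.rpow_pos_of_pos two_pos _).le
      _ = 2 ^ (a'' * (k + 1 : ℕ)) * F (t * 2 ^ (k + 1)) := by
          rw [← mul_assoc, e2, e1]

private lemma auxSqrt : Tendsto Real.sqrt atTop atTop := by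
  rw [tendsto_atTop_atTop]
  intro b
  refine ⟨max (b ^ 2) 0, fun x hx => ?_⟩
  calc b ≤ |b| := le_abs_self b
    _ = Real.sqrt (b ^ 2) := (Real.sqrt_sq_eq_abs b).symm
    _ ≤ Real.sqrt x := Real.sqrt_le_sqrt (le_trans (le_max_left _ _) hx)

private lemma auxLog : Tendsto (fun x : ℝ => x / Real.log x) atTop atTop := by
  refine tendsto_atTop_mono' atTop ?_ (Tendsto.atTop_div_const two_pos auxSqrt)
  filter_upwards [eventually_ge_atTop (2:ℝ)] with x hx
  have hxpos : (0:ℝ) < x := by linarith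
  have hlogpos : 0 < Real.log x := Real.log_pos (by linarith)
  have hsq : Real.sqrt x * Real.sqrt x = x := Real.mul_self_sqrt hxpos.le
  have hsp : 0 < Real.sqrt x := Real.sqrt_pos.mpr hxpos
  have hlog2 : Real.log x ≤ 2 * Real.sqrt x := by
    have h1 : Real.log (Real.sqrt x) ≤ Real.sqrt x - 1 :=
      Real.log_le_sub_one_of_pos hsp
    have h2 : Real.log (Real.sqrt x) = Real.log x / 2 := Real.log_sqrt hxpos.le
    linarith
  rw [div_le_div_iff₀ two_pos hlogpos]
  nlinarith

open Real in
private lemma main_aux (F : ℝ → ℝ) (hFpos : ∀ t, 0 < F t) (hanti : Antitone F)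
    (α : ℝ) (hα : 2 < α)
    (hrv2 : Tendsto (fun t => F (t * 2) / F t) atTop (nhds ((2:ℝ) ^ (-α))))
    (M : ℕ → ℝ) (hM : Tendsto M atTop atTop)
    (hMn : Tendsto (fun n : ℕ => Real.sqrt n / M n) atTop (nhds 0))
    (β : ℝ) (hβ0 : 0 < β) (hβ1 : β < 1) :
    Tendsto (fun n : ℕ => (n * F (M n / Real.log (M n))) / (n * F (M n)) ^ β)
      atTop (nhds 0) := by
  set a' := (α + 2) / 2 with ha'def
  have ha'2 : 2 < a' := by rw [ha'def]; linarith
  have ha'α : a' < α := by rw [ha'def]; linarith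
  set a'' := α + 1 with ha''def
  have ha''pos : 0 < a'' := by rw [ha''def]; linarith
  have hlt1 : (2:ℝ) ^ (-α) < 2 ^ (-a') :=
    Real.rpow_lt_rpow_of_exponent_lt one_lt_two (by linarith)
  have hlt2 : (2:ℝ) ^ (-a'') < 2 ^ (-α) :=
    Real.rpow_lt_rpow_of_exponent_lt one_lt_two (by rw [ha''def]; linarith)
  have hev := (hrv2.eventually_lt_const hlt1).and (hrv2.eventually_const_lt hlt2)
  obtain ⟨T₀, hT₀⟩ := eventually_atTop.mp hev
  set T := max T₀ 1 with hTdef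
  have hT : (0:ℝ) < T := lt_of_lt_of_le one_pos (le_max_right _ _)
  have hstepA : ∀ t, T ≤ t → F (t * 2) ≤ 2 ^ (-a') * F t := by
    intro t ht
    have h := (hT₀ t (le_trans (le_max_left _ _) ht)).1
    rw [div_lt_iff₀ (hFpos t)] at h
    exact h.le
  have hstepB : ∀ t, T ≤ t → F t ≤ 2 ^ a'' * F (t * 2) := by
    intro t ht
    have h := (hT₀ t (le_trans (le_max_left _ _) ht)).2
    rw [lt_div_iff₀ (hFpos t)] at h
    have e : (2:ℝ) ^ a'' * 2 ^ (-a'') = 1 := by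
      rw [← Real.rpow_add two_pos]; simp
    have h2 := mul_lt_mul_of_pos_left h (Real.rpow_pos_of_pos two_pos a'')
    rw [← mul_assoc, e, one_mul] at h2
    exact h2.le
  set C := (2 * T) ^ a' * F T with hCdef
  have hCpos : 0 < C := mul_pos (Real.rpow_pos_of_pos (by linarith) _) (hFpos T)
  have hA := auxA F hFpos hanti a' T (by linarith) hT hstepA
  have hB := auxB F a'' T hT ha''pos.le hstepB
  have hMdiv : Tendsto (fun n : ℕ => M n / Real.log (M n)) atTop atTop := auxLog.comp hM
  -- the eventual upper bound
  have hev2 : ∀ᶠ n : ℕ in atTop,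
      ((n:ℝ) * F (M n / Real.log (M n))) / ((n:ℝ) * F (M n)) ^ β ≤
        (2 * Real.log (M n)) ^ a'' *
          (C * (Real.sqrt n / M n) ^ (2:ℝ) * (M n) ^ (2 - a')) ^ (1 - β) := by
    filter_upwards [hM.eventually_ge_atTop T, hM.eventually_ge_atTop (Real.exp 1),
      hMdiv.eventually_ge_atTop T, eventually_ge_atTop 1] with n hMT hMe hsT hn1
    set L := Real.log (M n) with hLdef
    have hMpos : 0 < M n := lt_of_lt_of_le hT hMT
    have hL1 : 1 ≤ L := by
      rw [hLdef, Real.le_log_iff_exp_le hMpos]; simpa using hMe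
    have hLpos : 0 < L := lt_of_lt_of_le one_pos hL1
    set s := M n / L with hsdef
    have hspos : 0 < s := lt_of_lt_of_le hT hsT
    set k := ⌈Real.logb 2 L⌉₊ with hkdef
    have hlogbnn : 0 ≤ Real.logb 2 L := Real.logb_nonneg one_lt_two hL1
    have h2k1 : L ≤ 2 ^ k := by
      calc L = 2 ^ Real.logb 2 L := (Real.rpow_logb two_pos (by norm_num) hLpos).symm
        _ ≤ 2 ^ (k:ℝ) := Real.rpow_le_rpow_of_exponent_le one_le_two (Nat.le_ceil _)
        _ = 2 ^ k := Real.rpow_natCast 2 k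
    have h2k2 : (2:ℝ) ^ k ≤ 2 * L := by
      have hck : (k:ℝ) ≤ Real.logb 2 L + 1 := (Nat.ceil_lt_add_one hlogbnn).le
      calc (2:ℝ) ^ k = 2 ^ (k:ℝ) := (Real.rpow_natCast 2 k).symm
        _ ≤ 2 ^ (Real.logb 2 L + 1) := Real.rpow_le_rpow_of_exponent_le one_le_two hck
        _ = 2 * L := by
            rw [Real.rpow_add two_pos, Real.rpow_logb two_pos (by norm_num) hLpos,
              Real.rpow_one]; ring
    have hstep1 : F s ≤ (2 * L) ^ a'' * F (M n) := by
      have hBk := hB k s hsT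
      have hMle : M n ≤ s * 2 ^ k := by
        have h := mul_le_mul_of_nonneg_left h2k1 hspos.le
        rwa [hsdef, div_mul_cancel₀ _ hLpos.ne'] at h
      have hFk : F (s * 2 ^ k) ≤ F (M n) := hanti hMle
      have hexp : (2:ℝ) ^ (a'' * k) ≤ (2 * L) ^ a'' := by
        have e : (2:ℝ) ^ (a'' * (k:ℕ)) = ((2:ℝ) ^ k) ^ a'' := by
          rw [mul_comm, Real.rpow_mul (by norm_num : (0:ℝ) ≤ 2), Real.rpow_natCast]
        rw [e]
        exact Real.rpow_le_rpow (by positivity) h2k2 ha''pos.le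
      calc F s ≤ 2 ^ (a'' * k) * F (s * 2 ^ k) := hBk
        _ ≤ (2 * L) ^ a'' * F (M n) :=
          mul_le_mul hexp hFk (hFpos _).le (by positivity)
    have hnpos : (0:ℝ) < n := by exact_mod_cast Nat.lt_of_lt_of_le Nat.zero_lt_one hn1
    have hnFpos : 0 < (n:ℝ) * F (M n) := mul_pos hnpos (hFpos _)
    have hinner : (n:ℝ) * F (M n) ≤ C * (Real.sqrt n / M n) ^ (2:ℝ) * (M n) ^ (2 - a') := by
      have h1 : (n:ℝ) * F (M n) ≤ (n:ℝ) * (C * (M n) ^ (-a')) :=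
        mul_le_mul_of_nonneg_left (hA (M n) hMT) (Nat.cast_nonneg n)
      have heq : C * (Real.sqrt n / M n) ^ (2:ℝ) * (M n) ^ (2 - a') =
          (n:ℝ) * (C * (M n) ^ (-a')) := by
        rw [Real.div_rpow (Real.sqrt_nonneg _) hMpos.le, Real.rpow_two, Real.rpow_two,
          Real.sq_sqrt (Nat.cast_nonneg n),
          show (2 - a') = 2 + (-a') by ring, Real.rpow_add hMpos, Real.rpow_two]
        have hM2 : (M n) ^ 2 ≠ 0 := pow_ne_zero 2 hMpos.ne'
        field_simp
      rw [heq]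
      exact h1
    have hfrac : ((n:ℝ) * F s) / ((n:ℝ) * F (M n)) ^ β ≤
        (2 * L) ^ a'' * ((n:ℝ) * F (M n)) ^ (1 - β) := by
      have hnum : (n:ℝ) * F s ≤ (2 * L) ^ a'' * ((n:ℝ) * F (M n)) := by
        calc (n:ℝ) * F s ≤ (n:ℝ) * ((2 * L) ^ a'' * F (M n)) :=
            mul_le_mul_of_nonneg_left hstep1 (Nat.cast_nonneg n)
          _ = (2 * L) ^ a'' * ((n:ℝ) * F (M n)) := by ring
      have hdenpos : 0 < ((n:ℝ) * F (M n)) ^ β := Real.rpow_pos_of_pos hnFpos β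
      calc ((n:ℝ) * F s) / ((n:ℝ) * F (M n)) ^ β
          ≤ ((2 * L) ^ a'' * ((n:ℝ) * F (M n))) / ((n:ℝ) * F (M n)) ^ β := by gcongr
        _ = (2 * L) ^ a'' * ((n:ℝ) * F (M n)) ^ (1 - β) := by
            rw [mul_div_assoc, Real.rpow_sub hnFpos, Real.rpow_one]
    calc ((n:ℝ) * F s) / ((n:ℝ) * F (M n)) ^ β
        ≤ (2 * L) ^ a'' * ((n:ℝ) * F (M n)) ^ (1 - β) := hfrac
      _ ≤ (2 * L) ^ a'' *
          (C * (Real.sqrt n / M n) ^ (2:ℝ) * (M n) ^ (2 - a')) ^ (1 - β) := by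
          refine mul_le_mul_of_nonneg_left ?_ (Real.rpow_nonneg (by linarith) _)
          exact Real.rpow_le_rpow hnFpos.le hinner (by linarith)
  -- nonnegativity
  have h0 : ∀ n : ℕ, 0 ≤ ((n:ℝ) * F (M n / Real.log (M n))) / ((n:ℝ) * F (M n)) ^ β :=
    fun n => div_nonneg (mul_nonneg (Nat.cast_nonneg n) (hFpos _).le)
      (Real.rpow_nonneg (mul_nonneg (Nat.cast_nonneg n) (hFpos _).le) β)
  -- limit of the bound
  have hg : Tendsto (fun n : ℕ =>
      (2 * Real.log (M n)) ^ a'' *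
        (C * (Real.sqrt n / M n) ^ (2:ℝ) * (M n) ^ (2 - a')) ^ (1 - β)) atTop (nhds 0) := by
    have h1β : (0:ℝ) < 1 - β := by linarith
    have h1 : Tendsto (fun n : ℕ => ((Real.sqrt n / M n) ^ (2:ℝ)) ^ (1 - β)) atTop (nhds 0) := by
      have t1 : Tendsto (fun n : ℕ => (Real.sqrt n / M n) ^ (2:ℝ)) atTop (nhds 0) := by
        have t0 := hMn.rpow_const (p := 2) (Or.inr (by norm_num))
        simpa using t0
      have t2 := t1.rpow_const (p := 1 - β) (Or.inr h1β.le)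
      simpa [Real.zero_rpow h1β.ne'] using t2
    have hc : 0 < (a' - 2) * (1 - β) := by nlinarith
    have hlo : Tendsto (fun x : ℝ => Real.log x ^ a'' / x ^ ((a' - 2) * (1 - β)))
        atTop (nhds 0) :=
      (isLittleO_log_rpow_rpow_atTop a'' hc).tendsto_div_nhds_zero
    have h2 : Tendsto (fun x : ℝ => ((x ^ (2 - a')) ^ (1 - β)) * (2 * Real.log x) ^ a'')
        atTop (nhds 0) := by
      have h3 := hlo.const_mul ((2:ℝ) ^ a'')
      rw [mul_zero] at h3
      apply h3.congr'
      filter_upwards [eventually_ge_atTop (Real.exp 1)] with x hx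
      have hxpos : 0 < x := lt_of_lt_of_le (Real.exp_pos 1) hx
      have hlx : 0 ≤ Real.log x :=
        Real.log_nonneg (le_trans (Real.one_le_exp_iff.mpr zero_le_one) hx)
      rw [Real.mul_rpow (by norm_num : (0:ℝ) ≤ 2) hlx, ← Real.rpow_mul hxpos.le,
        show (2 - a') * (1 - β) = -((a' - 2) * (1 - β)) by ring, Real.rpow_neg hxpos.le]
      field_simp
    have hcomb := h1.mul ((h2.comp hM).const_mul (C ^ (1 - β)))
    rw [mul_zero, zero_mul] at hcomb
    apply hcomb.congr'
    filter_upwards [hM.eventually_ge_atTop T] with n hMT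
    have hMpos : 0 < M n := lt_of_lt_of_le hT hMT
    have hy : 0 ≤ (Real.sqrt n / M n) ^ (2:ℝ) := Real.rpow_nonneg (by positivity) _
    have hMp : 0 ≤ (M n) ^ (2 - a') := Real.rpow_nonneg hMpos.le _
    simp only [Function.comp]
    rw [Real.mul_rpow (mul_nonneg hCpos.le hy) hMp, Real.mul_rpow hCpos.le hy]
    ring
  exact squeeze_zero' (Eventually.of_forall h0) hev2 hg

/-- If `P(‖H‖ > ·)` is regularly varying of index `-α` with `α > 2`, `M_n → ∞` with
`M_n ≫ √n`, and `β ∈ (0,1)`, then `n P(‖H‖ > M_n/log M_n) = o((n P(‖H‖ > M_n))^β)`. -/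
theorem stmt10 {Ω : Type*} [MeasurableSpace Ω] (μ : Measure Ω) [IsProbabilityMeasure μ]
    (d : ℕ) (H : Ω → EuclideanSpace ℝ (Fin d)) (hHmeas : Measurable H)
    (α : ℝ) (hα : 2 < α)
    (hpos : ∀ t : ℝ, 0 < μ {ω | t < ‖H ω‖})
    (hrv : ∀ x : ℝ, 0 < x →
      Tendsto (fun t : ℝ => (μ {ω | t * x < ‖H ω‖}).toReal / (μ {ω | t < ‖H ω‖}).toReal)
        atTop (nhds (x ^ (-α))))
    (M : ℕ → ℝ) (hM : Tendsto M atTop atTop)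
    (hMn : Tendsto (fun n : ℕ => Real.sqrt n / M n) atTop (nhds 0))
    (β : ℝ) (hβ0 : 0 < β) (hβ1 : β < 1) :
    Tendsto (fun n =>
        (n * (μ {ω | M n / Real.log (M n) < ‖H ω‖}).toReal) /
          (n * (μ {ω | M n < ‖H ω‖}).toReal) ^ β)
      atTop (nhds 0) := by
  have hFpos : ∀ t : ℝ, 0 < (μ {ω | t < ‖H ω‖}).toReal := fun t =>
    ENNReal.toReal_pos (hpos t).ne' (measure_ne_top μ _)
  have hFanti : Antitone (fun t : ℝ => (μ {ω | t < ‖H ω‖}).toReal) := by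
    intro a b hab
    exact ENNReal.toReal_mono (measure_ne_top μ _)
      (measure_mono (fun ω hω => lt_of_le_of_lt hab hω))
  exact main_aux _ hFpos hFanti α hα (hrv 2 two_pos) M hM hMn β hβ0 hβ1
end
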